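/- arXiv:2012.00262 — 4 statements merged into one kernel-verified Lean document; each statement's English description precedes it below -/
import Mathlib

section
/- Every n-vertex tournament has at most n·(n/2)^k directed paths with k edges, i.e., the number of sequences of k+1 distinct vertices v₀, v₁, ..., v_k such that each edge v_i → v_{i+1} is directed forward is at most n·(n/2)^k. -/
/-!
Counting paths by walks, it suffices to bound `𝟙ᵀ A ^ k 𝟙` for the adjacency matrix `A`. Since
`A + Aᵀ ≤ J` entrywise, the numerical radius of `A` is at most `n / 2`, and the Berger–Pearcy power
inequality `w(A ^ k) ≤ w(A) ^ k` then gives `𝟙ᵀ A ^ k 𝟙 ≤ (n / 2) ^ k ‖𝟙‖ ^ 2 = n (n / 2) ^ k`.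
-/

open Finset Matrix
open scoped InnerProductSpace

theorem IsPrimitiveRoot.sum_geom_sum_smul {K R : Type*} [CommRing K] [IsDomain K] [Ring R]
    [Algebra K R] {ζ : K} {k : ℕ} (hζ : IsPrimitiveRoot ζ k) (b : R) :
    ∑ j ∈ range k, ∑ m ∈ range k, (ζ ^ j • b) ^ m = k := by
  have hroot : ∀ m ∈ range k, m ≠ 0 → ∑ j ∈ range k, (ζ ^ m) ^ j = 0 := fun m hm hm0 ↦
    eq_zero_of_ne_zero_of_mul_left_eq_zero
      (sub_ne_zero_of_ne (hζ.pow_ne_one_of_pos_of_lt hm0 (mem_range.1 hm)).symm)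
      (by rw [mul_neg_geom_sum, ← pow_mul, mul_comm, pow_mul, hζ.pow_eq_one, one_pow, sub_self])
  have hswap : ∀ j m, (ζ ^ j • b) ^ m = (ζ ^ m) ^ j • b ^ m := fun j m ↦ by
    rw [smul_pow, ← pow_mul, ← pow_mul, mul_comm]
  simp_rw [hswap]
  rw [sum_comm]
  simp_rw [← sum_smul]
  rcases k.eq_zero_or_pos with rfl | hk
  · simp
  rw [sum_eq_single_of_mem 0 (mem_range.2 hk) fun m hm hm0 ↦ by rw [hroot m hm hm0, zero_smul]]
  simp [Nat.cast_smul_eq_nsmul]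

section NumericalRadius

variable {E : Type*} [NormedAddCommGroup E] [InnerProductSpace ℂ E] {T : Module.End ℂ E} {c : ℝ}

theorem re_inner_sub_smul_apply_nonneg
    (hT : ∀ x, ‖⟪x, T x⟫_ℂ‖ ≤ c * ‖x‖ ^ 2) {a : ℂ} (ha : ‖a‖ * c ≤ 1) (x : E) :
    0 ≤ RCLike.re ⟪x, x - a • T x⟫_ℂ := by
  rw [inner_sub_right, inner_smul_right, map_sub, inner_self_eq_norm_sq, sub_nonneg]
  calc RCLike.re (a * ⟪x, T x⟫_ℂ) ≤ ‖a‖ * ‖⟪x, T x⟫_ℂ‖ :=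
        (RCLike.re_le_norm _).trans (norm_mul _ _).le
    _ ≤ ‖a‖ * (c * ‖x‖ ^ 2) := by gcongr; exact hT x
    _ ≤ ‖x‖ ^ 2 := by nlinarith [sq_nonneg ‖x‖]

theorem re_inner_pow_apply_le_of_norm_inner_le (hc : 0 < c) (hT : ∀ x, ‖⟪x, T x⟫_ℂ‖ ≤ c * ‖x‖ ^ 2)
    (k : ℕ) (x : E) : RCLike.re ⟪x, (T ^ k) x⟫_ℂ ≤ c ^ k * ‖x‖ ^ 2 := by
  rcases k.eq_zero_or_pos with rfl | hk
  · simp only [pow_zero, Module.End.one_apply, one_mul, inner_self_eq_norm_sq, le_refl]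
  obtain ⟨ζ, hζ⟩ : ∃ ζ : ℂ, IsPrimitiveRoot ζ k := ⟨_, Complex.isPrimitiveRoot_exp k hk.ne'⟩
  -- Pearcy's trick: `1 - B ^ k` factors as `(1 - ζ ^ j • B) * G j` for every `j`, while the `G j`
  -- sum to `k`; so `k ⟪x, (1 - B ^ k) x⟫` is a sum of terms `⟪y, (1 - ζ ^ j • B) y⟫`, each of
  -- nonnegative real part since `ζ ^ j • B` has numerical radius at most `1`.
  set B : Module.End ℂ E := ((c⁻¹ : ℝ) : ℂ) • T
  set G : ℕ → Module.End ℂ E := fun j ↦ ∑ m ∈ range k, (ζ ^ j • B) ^ m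
  have hG : ∀ j, (1 - ζ ^ j • B) * G j = 1 - B ^ k := fun j ↦ by
    rw [mul_neg_geom_sum, smul_pow, ← pow_mul, mul_comm, pow_mul, hζ.pow_eq_one, one_pow, one_smul]
  have hsum : (k : ℂ) * ⟪x, (1 - B ^ k) x⟫_ℂ =
      ∑ j ∈ range k, ⟪G j x, G j x - (ζ ^ j * (c⁻¹ : ℝ)) • T (G j x)⟫_ℂ := by
    calc (k : ℂ) * ⟪x, (1 - B ^ k) x⟫_ℂ = ⟪(∑ j ∈ range k, G j) x, (1 - B ^ k) x⟫_ℂ := by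
          rw [hζ.sum_geom_sum_smul, Module.End.natCast_apply, ← Nat.cast_smul_eq_nsmul ℂ,
            inner_smul_left, map_natCast]
      _ = ∑ j ∈ range k, ⟪G j x, ((1 - ζ ^ j • B) * G j) x⟫_ℂ := by
          simp only [hG, LinearMap.sum_apply, sum_inner]
      _ = _ := by
          simp only [Module.End.mul_apply, LinearMap.sub_apply, Module.End.one_apply,
            LinearMap.smul_apply, smul_smul, B]
  have hnonneg : 0 ≤ RCLike.re ⟪x, (1 - B ^ k) x⟫_ℂ := by
    have h : 0 ≤ RCLike.re ((k : ℂ) * ⟪x, (1 - B ^ k) x⟫_ℂ) := by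
      rw [hsum, map_sum]
      refine sum_nonneg fun j _ ↦ re_inner_sub_smul_apply_nonneg hT ?_ _
      simp [hc.ne', abs_of_pos hc, hζ.norm'_eq_one hk.ne']
    rwa [← Complex.ofReal_natCast, RCLike.re_to_complex, Complex.re_ofReal_mul,
      mul_nonneg_iff_of_pos_left (by positivity)] at h
  have hBk : B ^ k = ((c⁻¹ ^ k : ℝ) : ℂ) • T ^ k := by
    simp only [B, smul_pow, Complex.ofReal_pow]
  rw [LinearMap.sub_apply, Module.End.one_apply, hBk, LinearMap.smul_apply, inner_sub_right,
    inner_smul_right, map_sub, inner_self_eq_norm_sq, RCLike.re_to_complex, Complex.re_ofReal_mul,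
    inv_pow, sub_nonneg, inv_mul_le_iff₀ (by positivity)] at hnonneg
  exact hnonneg

end NumericalRadius

theorem Matrix.sum_mul_prod_eq_sum_vecMul_pow {R ι : Type*} [CommSemiring R] [Fintype ι]
    [DecidableEq ι] (A : Matrix ι ι R) (k : ℕ) (φ : ι → R) :
    ∑ f : Fin (k + 1) → ι, φ (f 0) * ∏ i : Fin k, A (f i.castSucc) (f i.succ) =
      ∑ v, (φ ᵥ* A ^ k) v := by
  induction k generalizing φ with
  | zero => simpa using (Equiv.funUnique (Fin 1) ι).sum_comp φ
  | succ k ih =>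
    rw [← (Fin.consEquiv fun _ ↦ ι).sum_comp, Fintype.sum_prod_type, sum_comm, pow_succ',
      ← vecMul_vecMul, ← ih]
    refine sum_congr rfl fun f _ ↦ ?_
    simp only [Fin.consEquiv_apply, Fin.prod_univ_succ, Fin.cons_zero, Fin.castSucc_zero,
      Fin.cons_succ, ← Fin.succ_castSucc, vecMul, dotProduct, sum_mul, mul_assoc]

theorem Matrix.sum_prod_eq_sum_sum_pow {R ι : Type*} [CommSemiring R] [Fintype ι]
    [DecidableEq ι] (A : Matrix ι ι R) (k : ℕ) :
    ∑ f : Fin (k + 1) → ι, ∏ i : Fin k, A (f i.castSucc) (f i.succ) = ∑ u, ∑ v, (A ^ k) u v := by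
  simpa [vecMul, dotProduct, sum_comm (γ := ι)] using A.sum_mul_prod_eq_sum_vecMul_pow k 1

def relAdjMatrix {V : Type*} (R : Type*) [Zero R] [One R] (r : V → V → Prop) [DecidableRel r] :
    Matrix V V R :=
  Matrix.of fun u v ↦ if r u v then 1 else 0

theorem card_walks_eq_sum_sum_relAdjMatrix_pow {V : Type*} [Fintype V] [DecidableEq V]
    (R : Type*) [CommSemiring R] (r : V → V → Prop) [DecidableRel r] (k : ℕ) :
    (Nat.card {f : Fin (k + 1) → V // ∀ i : Fin k, r (f i.castSucc) (f i.succ)} : R) =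
      ∑ u, ∑ v, (relAdjMatrix R r ^ k) u v := by
  rw [← sum_prod_eq_sum_sum_pow, Nat.card_eq_fintype_card, Fintype.card_subtype, card_filter,
    Nat.cast_sum]
  simp [relAdjMatrix, prod_boole]

theorem sum_sum_mul_mul_le_card_div_two_mul {ι : Type*} [Fintype ι] {a : ι → ι → ℝ}
    (ha : ∀ u v, a u v + a v u ≤ 1) {x : ι → ℝ} (hx : ∀ u, 0 ≤ x u) :
    ∑ u, ∑ v, a u v * (x u * x v) ≤ Fintype.card ι / 2 * ∑ u, x u ^ 2 := by
  have hsymm : 2 * ∑ u, ∑ v, a u v * (x u * x v) = ∑ u, ∑ v, (a u v + a v u) * (x u * x v) := by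
    have hswap : ∑ u, ∑ v, a v u * (x u * x v) = ∑ u, ∑ v, a u v * (x u * x v) := by
      rw [sum_comm]
      simp only [mul_comm (x _) (x _)]
    rw [two_mul]
    nth_rw 2 [← hswap]
    simp only [← sum_add_distrib, add_mul]
  have hbound : ∑ u, ∑ v, (a u v + a v u) * (x u * x v) ≤ (∑ u, x u) ^ 2 := by
    rw [sq, sum_mul_sum]
    refine sum_le_sum fun u _ ↦ sum_le_sum fun v _ ↦ ?_
    exact mul_le_of_le_one_left (mul_nonneg (hx u) (hx v)) (ha u v)
  have hcs := sq_sum_le_card_mul_sum_sq (s := univ) (f := x)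
  rw [card_univ] at hcs
  linarith

theorem Matrix.norm_inner_toEuclideanCLM_le {ι : Type*} [Fintype ι] [DecidableEq ι]
    {A : Matrix ι ι ℂ} (hA : ∀ u v, ‖A u v‖ + ‖A v u‖ ≤ 1) (w : EuclideanSpace ℂ ι) :
    ‖⟪w, toEuclideanCLM (𝕜 := ℂ) A w⟫_ℂ‖ ≤ Fintype.card ι / 2 * ‖w‖ ^ 2 := by
  calc ‖⟪w, toEuclideanCLM (𝕜 := ℂ) A w⟫_ℂ‖
      = ‖∑ u, ∑ v, A u v * w v * star (w u)‖ := by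
        simp [EuclideanSpace.inner_eq_star_dotProduct, dotProduct, mulVec, sum_mul]
    _ ≤ ∑ u, ∑ v, ‖A u v‖ * (‖w u‖ * ‖w v‖) := by
        refine (norm_sum_le _ _).trans (sum_le_sum fun u _ ↦ (norm_sum_le _ _).trans ?_)
        refine sum_le_sum fun v _ ↦ ?_
        simp only [norm_mul, norm_star]
        exact le_of_eq (by ring)
    _ ≤ Fintype.card ι / 2 * ∑ u, ‖w u‖ ^ 2 :=
        sum_sum_mul_mul_le_card_div_two_mul hA fun u ↦ norm_nonneg _
    _ = Fintype.card ι / 2 * ‖w‖ ^ 2 := by rw [EuclideanSpace.norm_sq_eq]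

theorem norm_relAdjMatrix_add_norm_relAdjMatrix_le_one {V R : Type*} [SeminormedRing R]
    [NormOneClass R] {r : V → V → Prop} [DecidableRel r] (hr : ∀ u v, r u v → ¬ r v u)
    (u v : V) : ‖relAdjMatrix R r u v‖ + ‖relAdjMatrix R r v u‖ ≤ 1 := by
  by_cases huv : r u v
  · simp [relAdjMatrix, huv, hr u v huv]
  · by_cases hvu : r v u <;> simp [relAdjMatrix, huv, hvu]

theorem card_walks_le_of_asymm {V : Type*} [Fintype V] {r : V → V → Prop}
    (hr : ∀ u v, r u v → ¬ r v u) (k : ℕ) :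
    (Nat.card {f : Fin (k + 1) → V // ∀ i : Fin k, r (f i.castSucc) (f i.succ)} : ℝ) ≤
      Fintype.card V * (Fintype.card V / 2) ^ k := by
  classical
  rcases isEmpty_or_nonempty V with _ | _
  · simp
  have hbound := re_inner_pow_apply_le_of_norm_inner_le
    (T := (toEuclideanCLM (𝕜 := ℂ) (relAdjMatrix ℂ r) : Module.End ℂ (EuclideanSpace ℂ V)))
    (by positivity) ((relAdjMatrix ℂ r).norm_inner_toEuclideanCLM_le
      (norm_relAdjMatrix_add_norm_relAdjMatrix_le_one hr)) k (WithLp.toLp 2 fun _ ↦ 1)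
  rw [← ContinuousLinearMap.toLinearMap_pow, ← map_pow, ContinuousLinearMap.coe_coe,
    EuclideanSpace.inner_eq_star_dotProduct, ofLp_toEuclideanCLM,
    EuclideanSpace.norm_sq_eq] at hbound
  simp only [dotProduct, mulVec, mul_one, Pi.star_apply, star_one,
    ← card_walks_eq_sum_sum_relAdjMatrix_pow, Nat.card_eq_fintype_card, RCLike.natCast_re,
    norm_one, one_pow, sum_const, card_univ, nsmul_eq_mul] at hbound
  rw [Nat.card_eq_fintype_card, mul_comm]
  exact hbound

theorem tournament_path_count (n k : ℕ) (r : Fin n → Fin n → Prop)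
    (hirr : ∀ u, ¬ r u u)
    (htour : ∀ u v : Fin n, u ≠ v → (r u v ↔ ¬ r v u)) :
    (Nat.card {v : Fin (k+1) → Fin n // Function.Injective v ∧
      ∀ i : Fin k, r (v i.castSucc) (v i.succ)} : ℝ) ≤ n * (n / 2 : ℝ) ^ k := by
  have hasymm : ∀ u v, r u v → ¬ r v u := fun u v huv ↦ by
    rcases eq_or_ne u v with rfl | huv'
    · exact absurd huv (hirr u)
    · exact (htour u v huv').1 huv
  calc (Nat.card {v : Fin (k+1) → Fin n // Function.Injective v ∧
        ∀ i : Fin k, r (v i.castSucc) (v i.succ)} : ℝ)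
      ≤ Nat.card {v : Fin (k+1) → Fin n // ∀ i : Fin k, r (v i.castSucc) (v i.succ)} := by
        exact_mod_cast Nat.card_le_card_of_injective _
          (Subtype.impEmbedding _ _ fun v (hv : Function.Injective v ∧ _) ↦ hv.2).injective
    _ ≤ n * (n / 2 : ℝ) ^ k := by simpa using card_walks_le_of_asymm hasymm k
end

section
/- Let f : [0,1]² → [0,1] be integrable with f(x,y) + f(y,x) ≤ 1 for all x,y. Define g₀ ≡ 1 and g_t(y) = ∫₀¹ g_{t-1}(x) f(x,y) dx for t ≥ 1. Then for every t ≥ 1, ∫∫ g_t(y)² f(y,z) dy dz ≤ (1/4) ∫∫ g_{t-1}(x)² f(x,y) dx dy. -/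
/-!
Fix y and write G = g_t(y), A = ∫ g_{t-1}(x)² f(x,y) dx, B = ∫ f(x,y) dx, C = ∫ f(y,z) dz.
Integrating 0 ≤ (g_{t-1}(x) - 2G)² f(x,y) over x gives 4G²(1 - B) ≤ A, and integrating
f(x,y) + f(y,x) ≤ 1 gives B + C ≤ 1, so G² C ≤ G² (1 - B) ≤ A / 4. Integrating over y and
swapping the order of integration on the right yields the claim.
-/

open MeasureTheory Set

variable {α : Type*} [MeasurableSpace α] {μ : Measure α}

lemma four_mul_sq_integral_mul_mul_one_sub_le {φ w : α → ℝ} (hw : 0 ≤ᵐ[μ] w)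
    (hw_int : Integrable w μ) (hφw : Integrable (fun x => φ x * w x) μ)
    (hφ2w : Integrable (fun x => φ x ^ 2 * w x) μ) :
    4 * (∫ x, φ x * w x ∂μ) ^ 2 * (1 - ∫ x, w x ∂μ) ≤ ∫ x, φ x ^ 2 * w x ∂μ := by
  set G := ∫ x, φ x * w x ∂μ
  have hexpand : ∫ x, (φ x - 2 * G) ^ 2 * w x ∂μ
      = ∫ x, φ x ^ 2 * w x ∂μ - 4 * G * G + 4 * G ^ 2 * ∫ x, w x ∂μ := by
    have hpoint : (fun x => (φ x - 2 * G) ^ 2 * w x)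
        = fun x => φ x ^ 2 * w x - 4 * G * (φ x * w x) + 4 * G ^ 2 * w x := by
      funext x; ring
    have hdiff : Integrable (fun x => φ x ^ 2 * w x - 4 * G * (φ x * w x)) μ :=
      hφ2w.sub (hφw.const_mul _)
    rw [hpoint, integral_add hdiff (hw_int.const_mul _),
      integral_sub hφ2w (hφw.const_mul _), integral_const_mul, integral_const_mul]
  have hnonneg : 0 ≤ ∫ x, (φ x - 2 * G) ^ 2 * w x ∂μ :=
    integral_nonneg_of_ae (hw.mono fun x hx => mul_nonneg (sq_nonneg _) hx)
  linarith

lemma MeasureTheory.AEStronglyMeasurable.integral_mul_kernel [SFinite μ] {f : α → α → ℝ}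
    {φ : α → ℝ} (hφ : AEStronglyMeasurable φ μ)
    (hf : AEStronglyMeasurable (fun p : α × α => f p.1 p.2) (μ.prod μ)) :
    AEStronglyMeasurable (fun y => ∫ x, φ x * f x y ∂μ) μ :=
  (hφ.comp_snd.mul hf.prod_swap).integral_prod_right'

section Kernel

variable [IsProbabilityMeasure μ] {s : Set α} {f : α → α → ℝ}

lemma integral_mul_kernel_mem_Icc (hs : ∀ᵐ x ∂μ, x ∈ s)
    (hf : ∀ x ∈ s, ∀ y ∈ s, f x y ∈ Icc (0 : ℝ) 1) {φ : α → ℝ}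
    (hφ : ∀ x ∈ s, φ x ∈ Icc (0 : ℝ) 1) {y : α} (hy : y ∈ s) :
    ∫ x, φ x * f x y ∂μ ∈ Icc (0 : ℝ) 1 := by
  have hmem : ∀ᵐ x ∂μ, φ x * f x y ∈ Icc (0 : ℝ) 1 :=
    hs.mono fun x hx => ⟨mul_nonneg (hφ x hx).1 (hf x hx y hy).1,
      mul_le_one₀ (hφ x hx).2 (hf x hx y hy).1 (hf x hx y hy).2⟩
  refine ⟨integral_nonneg_of_ae (hmem.mono fun x hx => hx.1), ?_⟩
  calc ∫ x, φ x * f x y ∂μ ≤ ∫ _, (1 : ℝ) ∂μ :=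
        integral_mono_of_nonneg (hmem.mono fun x hx => hx.1) (integrable_const _)
          (hmem.mono fun x hx => hx.2)
    _ = 1 := by simp

lemma sq_integral_mul_kernel_mul_integral_le (hs : ∀ᵐ x ∂μ, x ∈ s)
    (hf0 : ∀ x ∈ s, ∀ y ∈ s, 0 ≤ f x y) (hanti : ∀ x ∈ s, ∀ y ∈ s, f x y + f y x ≤ 1)
    {φ : α → ℝ} {y : α} (hy : y ∈ s) (hin : Integrable (fun x => f x y) μ)
    (hout : Integrable (fun z => f y z) μ) (hφ : Integrable (fun x => φ x * f x y) μ)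
    (hφ2 : Integrable (fun x => φ x ^ 2 * f x y) μ) :
    (∫ x, φ x * f x y ∂μ) ^ 2 * ∫ z, f y z ∂μ ≤ 1 / 4 * ∫ x, φ x ^ 2 * f x y ∂μ := by
  have hvar := four_mul_sq_integral_mul_mul_one_sub_le
    (hs.mono fun x hx => hf0 x hx y hy) hin hφ hφ2
  have hin_add_out : ∫ x, f x y ∂μ + ∫ z, f y z ∂μ ≤ 1 := by
    rw [← integral_add hin hout]
    calc ∫ x, (f x y + f y x) ∂μ ≤ ∫ _, (1 : ℝ) ∂μ :=
          integral_mono_ae (hin.add hout) (integrable_const _)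
            (hs.mono fun x hx => hanti x hx y hy)
      _ = 1 := by simp
  nlinarith [sq_nonneg (∫ x, φ x * f x y ∂μ)]

lemma integral_mul_kernel_contraction (hs : ∀ᵐ x ∂μ, x ∈ s)
    (hf : Integrable (fun p : α × α => f p.1 p.2) (μ.prod μ))
    (hf0 : ∀ x ∈ s, ∀ y ∈ s, 0 ≤ f x y) (hanti : ∀ x ∈ s, ∀ y ∈ s, f x y + f y x ≤ 1)
    {φ : α → ℝ} {M : ℝ} (hφ : AEStronglyMeasurable φ μ) (hφM : ∀ᵐ x ∂μ, ‖φ x‖ ≤ M) :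
    ∫ y, ∫ z, (∫ x, φ x * f x y ∂μ) ^ 2 * f y z ∂μ ∂μ
      ≤ 1 / 4 * ∫ x, ∫ y, φ x ^ 2 * f x y ∂μ ∂μ := by
  have hφf : Integrable (fun p : α × α => φ p.1 * f p.1 p.2) (μ.prod μ) :=
    hf.bdd_mul hφ.comp_fst (Measure.quasiMeasurePreserving_fst.ae hφM)
  have hφ2f : Integrable (fun p : α × α => φ p.1 ^ 2 * f p.1 p.2) (μ.prod μ) :=
    have hφ2M : ∀ᵐ x ∂μ, ‖φ x ^ 2‖ ≤ M ^ 2 := hφM.mono fun x hx => by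
      rw [norm_pow]; exact pow_le_pow_left₀ (norm_nonneg _) hx 2
    hf.bdd_mul (hφ.pow 2).comp_fst (Measure.quasiMeasurePreserving_fst.ae hφ2M)
  have hpoint : ∀ᵐ y ∂μ, (∫ x, φ x * f x y ∂μ) ^ 2 * ∫ z, f y z ∂μ
      ≤ 1 / 4 * ∫ x, φ x ^ 2 * f x y ∂μ := by
    filter_upwards [hs, hf.prod_left_ae, hf.prod_right_ae, hφf.prod_left_ae, hφ2f.prod_left_ae]
      with y hy hin hout hφy hφ2y
    exact sq_integral_mul_kernel_mul_integral_le hs hf0 hanti hy hin hout hφy hφ2y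
  have hlhs_nonneg : ∀ᵐ y ∂μ, 0 ≤ (∫ x, φ x * f x y ∂μ) ^ 2 * ∫ z, f y z ∂μ :=
    hs.mono fun y hy => mul_nonneg (sq_nonneg _)
      (integral_nonneg_of_ae (hs.mono fun z hz => hf0 y hy z hz))
  calc ∫ y, ∫ z, (∫ x, φ x * f x y ∂μ) ^ 2 * f y z ∂μ ∂μ
      = ∫ y, (∫ x, φ x * f x y ∂μ) ^ 2 * ∫ z, f y z ∂μ ∂μ := by
        simp only [integral_const_mul]
    _ ≤ ∫ y, 1 / 4 * ∫ x, φ x ^ 2 * f x y ∂μ ∂μ :=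
        integral_mono_of_nonneg hlhs_nonneg (hφ2f.integral_prod_right.const_mul _) hpoint
    _ = 1 / 4 * ∫ x, ∫ y, φ x ^ 2 * f x y ∂μ ∂μ := by
        rw [integral_const_mul, integral_integral_swap (f := fun x y => φ x ^ 2 * f x y) hφ2f]

end Kernel

theorem contraction_step (f : ℝ → ℝ → ℝ)
    (hint : IntegrableOn (fun p : ℝ × ℝ => f p.1 p.2)
      (Set.Icc (0:ℝ) 1 ×ˢ Set.Icc (0:ℝ) 1))
    (hrange : ∀ x ∈ Set.Icc (0:ℝ) 1, ∀ y ∈ Set.Icc (0:ℝ) 1, f x y ∈ Set.Icc (0:ℝ) 1)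
    (hanti : ∀ x ∈ Set.Icc (0:ℝ) 1, ∀ y ∈ Set.Icc (0:ℝ) 1, f x y + f y x ≤ 1)
    (g : ℕ → ℝ → ℝ) (hg0 : ∀ y, g 0 y = 1)
    (hgs : ∀ t y, g (t+1) y = ∫ x in Set.Icc (0:ℝ) 1, g t x * f x y)
    (t : ℕ) (ht : 1 ≤ t) :
    (∫ y in Set.Icc (0:ℝ) 1, ∫ z in Set.Icc (0:ℝ) 1, (g t y)^2 * f y z) ≤
      (1/4) * ∫ x in Set.Icc (0:ℝ) 1, ∫ y in Set.Icc (0:ℝ) 1, (g (t-1) x)^2 * f x y := by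
  obtain ⟨n, rfl⟩ : ∃ n, t = n + 1 := ⟨t - 1, by omega⟩
  set μ := volume.restrict (Icc (0:ℝ) 1)
  have : IsProbabilityMeasure μ := ⟨by simp [μ]⟩
  have hs : ∀ᵐ x ∂μ, x ∈ Icc (0:ℝ) 1 := ae_restrict_mem measurableSet_Icc
  have hf : Integrable (fun p : ℝ × ℝ => f p.1 p.2) (μ.prod μ) := by
    rwa [Measure.prod_restrict, ← Measure.volume_eq_prod]
  have hg : ∀ k, AEStronglyMeasurable (g k) μ ∧ ∀ y ∈ Icc (0:ℝ) 1, g k y ∈ Icc (0:ℝ) 1 := by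
    intro k
    induction k with
    | zero => simp [funext hg0, aestronglyMeasurable_const]
    | succ k ih =>
      rw [funext (hgs k)]
      exact ⟨ih.1.integral_mul_kernel hf.aestronglyMeasurable,
        fun y hy => integral_mul_kernel_mem_Icc hs hrange ih.2 hy⟩
  have hbound : ∀ᵐ x ∂μ, ‖g n x‖ ≤ 1 := hs.mono fun x hx => by
    rw [Real.norm_of_nonneg ((hg n).2 x hx).1]; exact ((hg n).2 x hx).2
  rw [funext (hgs n), Nat.add_sub_cancel]
  exact integral_mul_kernel_contraction hs hf (fun x hx y hy => (hrange x hx y hy).1) hanti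
    (hg n).1 hbound
end

section
/- Let f : [0,1]² → [0,1] be integrable with f(x,y) + f(y,x) ≤ 1 for all x,y. Define g₀ ≡ 1 and g_t(y) = ∫₀¹ g_{t-1}(x) f(x,y) dx. Then for every k ≥ 1, ∫∫ g_{k-1}(y)² f(y,z) dy dz ≤ 2^{-(2k-1)}. -/
/-!
Write `c(y) = ∫ f(x,y) dx` and `w(y) = ∫ f(y,z) dz`; antisymmetry gives `c + w ≤ 1`.
Cauchy–Schwarz with weight `f(·,y)` gives `g_t(y)² ≤ c(y) ∫ g_{t-1}(x)² f(x,y) dx`, hence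
`g_t(y)² w(y) ≤ w(1 - w) ∫ g_{t-1}² f(·,y) ≤ ¼ ∫ g_{t-1}² f(·,y)`, and integrating in `y`
(Fubini) gives `∫∫ g_t² f ≤ ¼ ∫∫ g_{t-1}² f`. Iterate from `∫∫ f ≤ ½`, which is antisymmetry
integrated over the square.
-/

open MeasureTheory Set Function

section General

variable {α β : Type*} [MeasurableSpace α] [MeasurableSpace β] {μ : Measure α}

theorem sq_integral_mul_le_integral_sq_mul_mul_integral {h w : α → ℝ} (hw : 0 ≤ᵐ[μ] w)
    (hw_int : Integrable w μ) (hhw : Integrable (fun x => h x * w x) μ)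
    (hhhw : Integrable (fun x => h x ^ 2 * w x) μ) :
    (∫ x, h x * w x ∂μ) ^ 2 ≤ (∫ x, h x ^ 2 * w x ∂μ) * ∫ x, w x ∂μ := by
  -- `c ↦ ∫ (h - c)² w` is a nonnegative quadratic, so its discriminant is nonpositive.
  have hquad : ∀ c : ℝ, 0 ≤ (∫ x, w x ∂μ) * (c * c) + (-2 * ∫ x, h x * w x ∂μ) * c +
      ∫ x, h x ^ 2 * w x ∂μ := by
    intro c
    have hexpand : ∫ x, (h x - c) ^ 2 * w x ∂μ =
        (∫ x, w x ∂μ) * (c * c) + (-2 * ∫ x, h x * w x ∂μ) * c + ∫ x, h x ^ 2 * w x ∂μ := by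
      have hfun : (fun x => (h x - c) ^ 2 * w x) =
          fun x => (h x ^ 2 * w x - 2 * c * (h x * w x)) + c ^ 2 * w x := by
        ext x; ring
      rw [hfun, integral_add ?_ (hw_int.const_mul _), integral_sub hhhw (hhw.const_mul _),
        integral_const_mul, integral_const_mul]
      · ring
      · exact hhhw.sub (hhw.const_mul _)
    rw [← hexpand]
    exact integral_nonneg_of_ae (hw.mono fun x hx => mul_nonneg (sq_nonneg _) hx)
  have hdiscrim := discrim_le_zero hquad
  rw [discrim] at hdiscrim
  linarith

theorem ae_ae_of_ae_prod_swap {ν : Measure β} [SFinite μ] [SFinite ν] {p : α × β → Prop}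
    (h : ∀ᵐ q ∂μ.prod ν, p q) : ∀ᵐ y ∂ν, ∀ᵐ x ∂μ, p (x, y) :=
  Measure.ae_ae_of_ae_prod (Measure.measurePreserving_swap.quasiMeasurePreserving.ae h)

end General

section Kernel

variable {α : Type*} [MeasurableSpace α] {μ : Measure α} [IsProbabilityMeasure μ]
  {f : α → α → ℝ} {h : α → ℝ}

theorem sq_integral_mul_mul_integral_le {u v : α → ℝ} (hu : 0 ≤ᵐ[μ] u) (hv : 0 ≤ᵐ[μ] v)
    (huv : ∀ᵐ x ∂μ, u x + v x ≤ 1) (hu_int : Integrable u μ) (hv_int : Integrable v μ)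
    (hhu : Integrable (fun x => h x * u x) μ) (hhhu : Integrable (fun x => h x ^ 2 * u x) μ) :
    (∫ x, h x * u x ∂μ) ^ 2 * ∫ x, v x ∂μ ≤ 1 / 4 * ∫ x, h x ^ 2 * u x ∂μ := by
  have hCS := sq_integral_mul_le_integral_sq_mul_mul_integral hu hu_int hhu hhhu
  have hUV : ∫ x, u x ∂μ + ∫ x, v x ∂μ ≤ 1 := by
    rw [← integral_add hu_int hv_int]
    simpa using integral_mono_ae (hu_int.add hv_int) (integrable_const 1) huv
  have hV := integral_nonneg_of_ae hv
  have hA := integral_nonneg_of_ae (hu.mono fun x hx => mul_nonneg (sq_nonneg (h x)) hx)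
  -- `G² V ≤ A U V ≤ A (1 - V) V ≤ A / 4`, where `G, A, U, V` are `∫ h u, ∫ h² u, ∫ u, ∫ v`
  nlinarith [mul_le_mul_of_nonneg_right hCS hV, mul_nonneg (mul_nonneg hA hV) (sub_nonneg.2 hUV),
    mul_nonneg hA (sq_nonneg (1 - 2 * ∫ x, v x ∂μ))]

theorem integrable_mul_kernel (hf : AEStronglyMeasurable (uncurry f) (μ.prod μ))
    (hf01 : ∀ᵐ q ∂μ.prod μ, f q.1 q.2 ∈ Icc 0 1) (hh : AEStronglyMeasurable h μ)
    (hh1 : ∀ᵐ x ∂μ, |h x| ≤ 1) :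
    Integrable (fun q : α × α => h q.1 * f q.1 q.2) (μ.prod μ) := by
  refine Integrable.of_bound (hh.comp_fst.mul hf) 1 ?_
  filter_upwards [hf01, Measure.quasiMeasurePreserving_fst.ae hh1] with q hq hq1
  rw [norm_mul, Real.norm_eq_abs, Real.norm_eq_abs, abs_of_nonneg hq.1]
  exact mul_le_one₀ hq1 hq.1 hq.2

theorem integrable_uncurry_kernel (hf : AEStronglyMeasurable (uncurry f) (μ.prod μ))
    (hf01 : ∀ᵐ q ∂μ.prod μ, f q.1 q.2 ∈ Icc 0 1) : Integrable (uncurry f) (μ.prod μ) :=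
  Integrable.of_bound hf 1 <| hf01.mono fun q hq => by
    rw [uncurry_apply_pair, Real.norm_eq_abs, abs_of_nonneg hq.1]
    exact hq.2

theorem aestronglyMeasurable_integral_mul_kernel
    (hf : AEStronglyMeasurable (uncurry f) (μ.prod μ)) (hh : AEStronglyMeasurable h μ) :
    AEStronglyMeasurable (fun y => ∫ x, h x * f x y ∂μ) μ :=
  (hh.comp_fst.mul hf).prod_swap.integral_prod_right'

theorem ae_abs_integral_mul_kernel_le_one (hf01 : ∀ᵐ q ∂μ.prod μ, f q.1 q.2 ∈ Icc 0 1)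
    (hh1 : ∀ᵐ x ∂μ, |h x| ≤ 1) : ∀ᵐ y ∂μ, |∫ x, h x * f x y ∂μ| ≤ 1 := by
  filter_upwards [ae_ae_of_ae_prod_swap hf01] with y hy
  have hbound : ∀ᵐ x ∂μ, ‖h x * f x y‖ ≤ 1 := by
    filter_upwards [hy, hh1] with x hx hx1
    rw [norm_mul, Real.norm_eq_abs, Real.norm_eq_abs, abs_of_nonneg hx.1]
    exact mul_le_one₀ hx1 hx.1 hx.2
  simpa using norm_integral_le_of_norm_le_const hbound

theorem integral_integral_le_half (hf : AEStronglyMeasurable (uncurry f) (μ.prod μ))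
    (hf01 : ∀ᵐ q ∂μ.prod μ, f q.1 q.2 ∈ Icc 0 1)
    (hanti : ∀ᵐ q ∂μ.prod μ, f q.1 q.2 + f q.2 q.1 ≤ 1) :
    ∫ y, ∫ z, f y z ∂μ ∂μ ≤ 1 / 2 := by
  have hF := integrable_uncurry_kernel hf hf01
  have hF_swap : Integrable (fun q => uncurry f q.swap) (μ.prod μ) := hF.swap
  have hsum : ∫ q, (uncurry f q + uncurry f q.swap) ∂μ.prod μ ≤ ∫ _, (1 : ℝ) ∂μ.prod μ :=
    integral_mono_ae (hF.add hF_swap) (integrable_const 1) hanti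
  rw [integral_add hF hF_swap, integral_prod_swap (uncurry f)] at hsum
  simp only [integral_const, probReal_univ, smul_eq_mul, mul_one] at hsum
  rw [integral_integral hF]
  exact (by linarith : ∫ q, uncurry f q ∂μ.prod μ ≤ 1 / 2)

theorem integral_integral_sq_integral_mul_le (hf : AEStronglyMeasurable (uncurry f) (μ.prod μ))
    (hf01 : ∀ᵐ q ∂μ.prod μ, f q.1 q.2 ∈ Icc 0 1)
    (hanti : ∀ᵐ q ∂μ.prod μ, f q.1 q.2 + f q.2 q.1 ≤ 1) (hh : AEStronglyMeasurable h μ)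
    (hh1 : ∀ᵐ x ∂μ, |h x| ≤ 1) :
    ∫ y, ∫ z, (∫ x, h x * f x y ∂μ) ^ 2 * f y z ∂μ ∂μ ≤
      1 / 4 * ∫ y, ∫ z, h y ^ 2 * f y z ∂μ ∂μ := by
  have hF := integrable_uncurry_kernel hf hf01
  have hH := integrable_mul_kernel hf hf01 hh hh1
  have hH2 := integrable_mul_kernel (h := fun x => h x ^ 2) hf hf01 (hh.pow 2)
    (hh1.mono fun x hx => by rw [abs_pow]; exact pow_le_one₀ (abs_nonneg _) hx)
  have hrow := Measure.ae_ae_of_ae_prod hf01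
  calc ∫ y, ∫ z, (∫ x, h x * f x y ∂μ) ^ 2 * f y z ∂μ ∂μ
      = ∫ y, (∫ x, h x * f x y ∂μ) ^ 2 * ∫ z, f y z ∂μ ∂μ := by
        simp_rw [integral_const_mul]
    _ ≤ ∫ y, 1 / 4 * ∫ x, h x ^ 2 * f x y ∂μ ∂μ := by
        refine integral_mono_of_nonneg ?_ (hH2.integral_prod_right.const_mul _) ?_
        · filter_upwards [hrow] with y hy
          exact mul_nonneg (sq_nonneg _) (integral_nonneg_of_ae (hy.mono fun z hz => hz.1))
        · filter_upwards [hrow, ae_ae_of_ae_prod_swap hf01, ae_ae_of_ae_prod_swap hanti,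
            hF.prod_left_ae, hF.prod_right_ae, hH.prod_left_ae, hH2.prod_left_ae]
            with y hrow_y hcol_y hsum_y hcol_int hrow_int hH_int hH2_int
          exact sq_integral_mul_mul_integral_le (hcol_y.mono fun x hx => hx.1)
            (hrow_y.mono fun x hx => hx.1) hsum_y hcol_int hrow_int hH_int hH2_int
    _ = 1 / 4 * ∫ y, ∫ z, h y ^ 2 * f y z ∂μ ∂μ := by
        rw [integral_const_mul, ← integral_integral_swap hH2]

theorem integral_integral_sq_mul_le_of_recursion
    (hf : AEStronglyMeasurable (uncurry f) (μ.prod μ))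
    (hf01 : ∀ᵐ q ∂μ.prod μ, f q.1 q.2 ∈ Icc 0 1)
    (hanti : ∀ᵐ q ∂μ.prod μ, f q.1 q.2 + f q.2 q.1 ≤ 1) (g : ℕ → α → ℝ) (hg0 : ∀ y, g 0 y = 1)
    (hgs : ∀ t y, g (t + 1) y = ∫ x, g t x * f x y ∂μ) (t : ℕ) :
    ∫ y, ∫ z, g t y ^ 2 * f y z ∂μ ∂μ ≤ (1 / 2) ^ (2 * t + 1) := by
  have hbounded : ∀ t, AEStronglyMeasurable (g t) μ ∧ ∀ᵐ x ∂μ, |g t x| ≤ 1 := by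
    intro t
    induction t with
    | zero => simp [funext hg0, aestronglyMeasurable_const]
    | succ t ih =>
      rw [funext (hgs t)]
      exact ⟨aestronglyMeasurable_integral_mul_kernel hf ih.1,
        ae_abs_integral_mul_kernel_le_one hf01 ih.2⟩
  induction t with
  | zero => simpa [hg0] using integral_integral_le_half hf hf01 hanti
  | succ t ih =>
    simp only [hgs t]
    calc _ ≤ 1 / 4 * ∫ y, ∫ z, g t y ^ 2 * f y z ∂μ ∂μ :=
          integral_integral_sq_integral_mul_le hf hf01 hanti (hbounded t).1 (hbounded t).2
      _ ≤ 1 / 4 * (1 / 2) ^ (2 * t + 1) := by gcongr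
      _ = (1 / 2) ^ (2 * (t + 1) + 1) := by ring

end Kernel

theorem iterated_contraction (f : ℝ → ℝ → ℝ)
    (hint : IntegrableOn (fun p : ℝ × ℝ => f p.1 p.2)
      (Set.Icc (0:ℝ) 1 ×ˢ Set.Icc (0:ℝ) 1))
    (hrange : ∀ x ∈ Set.Icc (0:ℝ) 1, ∀ y ∈ Set.Icc (0:ℝ) 1, f x y ∈ Set.Icc (0:ℝ) 1)
    (hanti : ∀ x ∈ Set.Icc (0:ℝ) 1, ∀ y ∈ Set.Icc (0:ℝ) 1, f x y + f y x ≤ 1)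
    (g : ℕ → ℝ → ℝ) (hg0 : ∀ y, g 0 y = 1)
    (hgs : ∀ t y, g (t+1) y = ∫ x in Set.Icc (0:ℝ) 1, g t x * f x y)
    (k : ℕ) (hk : 1 ≤ k) :
    (∫ y in Set.Icc (0:ℝ) 1, ∫ z in Set.Icc (0:ℝ) 1, (g (k-1) y)^2 * f y z) ≤
      (1/2 : ℝ) ^ (2*k - 1) := by
  let μ := volume.restrict (Icc (0:ℝ) 1)
  have : IsProbabilityMeasure μ := ⟨by simp [μ]⟩
  have hsquare : μ.prod μ = volume.restrict (Icc (0:ℝ) 1 ×ˢ Icc (0:ℝ) 1) := by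
    rw [Measure.prod_restrict, ← Measure.volume_eq_prod]
  have hmem : ∀ᵐ q ∂μ.prod μ, q.1 ∈ Icc (0:ℝ) 1 ∧ q.2 ∈ Icc (0:ℝ) 1 := by
    rw [hsquare]
    exact ae_restrict_mem (measurableSet_Icc.prod measurableSet_Icc)
  obtain ⟨t, rfl⟩ := Nat.exists_eq_add_of_le' hk
  rw [show 2 * (t + 1) - 1 = 2 * t + 1 by omega, Nat.add_sub_cancel]
  exact integral_integral_sq_mul_le_of_recursion (hsquare ▸ hint.aestronglyMeasurable)
    (hmem.mono fun q hq => hrange _ hq.1 _ hq.2) (hmem.mono fun q hq => hanti _ hq.1 _ hq.2)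
    g hg0 hgs t
end

section
/- The expected number of directed Hamilton paths in a uniformly random tournament on n vertices is n!/2^{n−1}; consequently, there exists an n-vertex tournament with at least n!/2^{n−1} directed Hamilton paths. -/
/-- A tournament encoded as a `Bool`-valued relation on `Fin n`. -/
def IsTournament {n : ℕ} (r : Fin n → Fin n → Bool) : Prop :=
  (∀ u, r u u = false) ∧ ∀ u v : Fin n, u ≠ v → (r u v = !r v u)

instance {n : ℕ} : DecidablePred (IsTournament (n := n)) := fun _ =>
  instDecidableAnd

/-- The number of directed Hamilton paths of a tournament on `Fin n`. -/
noncomputable def hamPathCount {n : ℕ} (r : Fin n → Fin n → Bool) : ℕ :=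
  Nat.card {l : List (Fin n) // l.Nodup ∧ l.length = n ∧
    l.Chain' (fun u v => r u v = true)}

/-!
Double count the pairs (tournament, Hamilton path). A Hamilton path is a permutation `σ` with
`σ i → σ (i + 1)` for all `i`, and relabelling the vertices by `σ` shows that `σ` is a Hamilton
path of exactly as many tournaments as the identity is. A tournament is a free choice of one bit
for each of the `n.choose 2` pairs `u < v`, and the identity is a Hamilton path iff the `n - 1`
bits on the pairs `(i, i + 1)` are set, so the pairs number `n! * 2 ^ (n.choose 2 - (n - 1))`.
Dividing by the `2 ^ n.choose 2` tournaments gives the mean, and some tournament reaches it.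
-/

open Finset Equiv

theorem card_filter_forall_mem_eq_mul_pow {α β : Type*} [Fintype α] [DecidableEq α]
    [Fintype β] [DecidableEq β] (s : Finset α) (g : α → β) :
    #{f : α → β | ∀ a ∈ s, f a = g a} * Fintype.card β ^ #s =
      Fintype.card β ^ Fintype.card α := by
  have hpi : ({f : α → β | ∀ a ∈ s, f a = g a} : Finset _) =
      Fintype.piFinset fun a => if a ∈ s then {g a} else univ := by
    ext f
    simp only [mem_filter, mem_univ, true_and, Fintype.mem_piFinset]
    refine forall_congr' fun a => ?_
    split_ifs with ha <;> simp [ha]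
  rw [hpi, Fintype.card_piFinset]
  simp only [apply_ite card, card_singleton, card_univ]
  rw [prod_ite, prod_const_one, one_mul, prod_const, ← pow_add]
  congr 1
  rw [filter_not, ← compl_eq_univ_sdiff]
  simp

namespace Tournament

variable {n : ℕ}

abbrev OrderedPair (n : ℕ) := {p : Fin n × Fin n // p.1 < p.2}

lemma card_orderedPair : Fintype.card (OrderedPair n) = n.choose 2 := by
  rw [Fintype.card_subtype, Fintype.card_product_filter_lt, Fintype.card_fin]

def upperHalf (r : Fin n → Fin n → Bool) (p : OrderedPair n) : Bool := r p.1.1 p.1.2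

def ofUpperHalf (f : OrderedPair n → Bool) (u v : Fin n) : Bool :=
  if h : u < v then f ⟨(u, v), h⟩ else if h' : v < u then !f ⟨(v, u), h'⟩ else false

lemma ofUpperHalf_of_lt (f : OrderedPair n → Bool) {u v : Fin n} (h : u < v) :
    ofUpperHalf f u v = f ⟨(u, v), h⟩ := dif_pos h

lemma isTournament_ofUpperHalf (f : OrderedPair n → Bool) : IsTournament (ofUpperHalf f) := by
  refine ⟨fun u => by simp [ofUpperHalf], fun u v huv => ?_⟩
  rcases huv.lt_or_gt with h | h <;> simp [ofUpperHalf, h, asymm h]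

lemma upperHalf_ofUpperHalf (f : OrderedPair n → Bool) : upperHalf (ofUpperHalf f) = f :=
  funext fun p => ofUpperHalf_of_lt f p.2

lemma ofUpperHalf_upperHalf {r : Fin n → Fin n → Bool} (hr : IsTournament r) :
    ofUpperHalf (upperHalf r) = r := by
  funext u v
  rcases lt_trichotomy u v with h | rfl | h
  · simp [ofUpperHalf, upperHalf, h]
  · simp [ofUpperHalf, hr.1]
  · simp [ofUpperHalf, upperHalf, h, asymm h, hr.2 u v h.ne']

lemma card_filter_isTournament_and (P : (Fin n → Fin n → Bool) → Prop) [DecidablePred P] :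
    #{r | IsTournament r ∧ P r} = #{f : OrderedPair n → Bool | P (ofUpperHalf f)} := by
  refine card_nbij' upperHalf ofUpperHalf ?_ ?_ ?_ ?_
  · intro r hr
    simp only [coe_filter, mem_univ, true_and, Set.mem_ofPred_eq] at hr ⊢
    rw [ofUpperHalf_upperHalf hr.1]
    exact hr.2
  · intro f hf
    simp only [coe_filter, mem_univ, true_and, Set.mem_ofPred_eq] at hf ⊢
    exact ⟨isTournament_ofUpperHalf f, hf⟩
  · exact fun r hr => ofUpperHalf_upperHalf (mem_filter.1 hr).2.1
  · exact fun f _ => upperHalf_ofUpperHalf f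

lemma card_tournaments : #{r : Fin n → Fin n → Bool | IsTournament r} = 2 ^ n.choose 2 := by
  simpa [card_orderedPair] using card_filter_isTournament_and (n := n) (fun _ => True)

def IsHamPathPerm (r : Fin n → Fin n → Bool) (σ : Perm (Fin n)) : Prop :=
  ∀ i (hi : i + 1 < n), r (σ ⟨i, by omega⟩) (σ ⟨i + 1, hi⟩) = true

instance (r : Fin n → Fin n → Bool) : DecidablePred (IsHamPathPerm r) := fun σ =>
  decidable_of_iff (∀ i : Fin n, ∀ hi : i.1 + 1 < n, r (σ i) (σ ⟨i + 1, hi⟩) = true)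
    ⟨fun h i hi => h ⟨i, by omega⟩ hi, fun h i hi => h i hi⟩

noncomputable def hamPathEquiv (r : Fin n → Fin n → Bool) :
    {σ : Perm (Fin n) // IsHamPathPerm r σ} ≃
      {l : List (Fin n) // l.Nodup ∧ l.length = n ∧ l.IsChain (fun u v => r u v = true)} where
  toFun σ := ⟨List.ofFn σ.1, List.nodup_ofFn.2 σ.1.injective, List.length_ofFn,
    List.isChain_ofFn.2 σ.2⟩
  invFun l :=
    have hlen := l.2.2.1
    ⟨Equiv.ofBijective (fun i => l.1[i.cast hlen.symm]) <| Finite.injective_iff_bijective.1 <|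
      (List.nodup_iff_injective_get.1 l.2.1).comp (Fin.cast_injective hlen.symm), by
        intro i hi
        simpa using List.isChain_iff_getElem.1 l.2.2.2 i (by omega)⟩
  left_inv σ := by ext; simp
  right_inv l := by
    ext1
    refine List.ext_getElem (by simp [l.2.2.1]) fun i _ _ => ?_
    simp

lemma hamPathCount_eq_card (r : Fin n → Fin n → Bool) :
    hamPathCount r = #{σ | IsHamPathPerm r σ} := by
  rw [← Fintype.card_subtype, ← Nat.card_eq_fintype_card]
  exact (Nat.card_congr (hamPathEquiv r)).symm

def relabel (σ : Perm (Fin n)) (r : Fin n → Fin n → Bool) (u v : Fin n) : Bool :=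
  r (σ u) (σ v)

lemma _root_.IsTournament.relabel {r : Fin n → Fin n → Bool} (hr : IsTournament r)
    (σ : Perm (Fin n)) : IsTournament (relabel σ r) :=
  ⟨fun u => hr.1 (σ u), fun _ _ huv => hr.2 _ _ (σ.injective.ne huv)⟩

lemma card_isHamPathPerm_eq_card_one (σ : Perm (Fin n)) :
    #{r | IsTournament r ∧ IsHamPathPerm r σ} =
      #{r | IsTournament r ∧ IsHamPathPerm r (1 : Perm (Fin n))} := by
  refine card_nbij' (relabel σ) (relabel σ.symm) ?_ ?_ ?_ ?_
  · intro r hr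
    simp only [coe_filter, mem_univ, true_and, Set.mem_ofPred_eq] at hr ⊢
    exact ⟨hr.1.relabel σ, hr.2⟩
  · intro r hr
    simp only [coe_filter, mem_univ, true_and, Set.mem_ofPred_eq] at hr ⊢
    refine ⟨hr.1.relabel σ.symm, fun i hi => ?_⟩
    simpa [relabel] using hr.2 i hi
  · intro r _
    funext u v
    simp [relabel]
  · intro r _
    funext u v
    simp [relabel]

def consecutivePairs (n : ℕ) : Finset (OrderedPair n) := {p | (p.1.2 : ℕ) = p.1.1 + 1}

lemma card_consecutivePairs : #(consecutivePairs n) = n - 1 := by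
  rw [← card_range (n - 1)]
  refine card_bij (fun p _ => p.1.1) (fun p hp => ?_) (fun p hp q hq hpq => ?_) fun i hi => ?_
  · simp only [consecutivePairs, mem_filter, mem_univ, true_and] at hp
    simp only [mem_range]
    omega
  · simp only [consecutivePairs, mem_filter, mem_univ, true_and] at hp hq
    ext <;> simp_all
  · simp only [mem_range] at hi
    exact ⟨⟨(⟨i, by omega⟩, ⟨i + 1, by omega⟩), by simp⟩, by simp [consecutivePairs], rfl⟩

lemma isHamPathPerm_one_ofUpperHalf_iff (f : OrderedPair n → Bool) :
    IsHamPathPerm (ofUpperHalf f) 1 ↔ ∀ p ∈ consecutivePairs n, f p = true := by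
  constructor
  · rintro h ⟨⟨u, v⟩, huv⟩ hp
    simp only [consecutivePairs, mem_filter, mem_univ, true_and] at hp
    have hi : (u : ℕ) + 1 < n := hp ▸ v.2
    obtain rfl : (⟨u + 1, hi⟩ : Fin n) = v := Fin.ext hp.symm
    rw [← ofUpperHalf_of_lt f huv]
    exact h u hi
  · intro h i hi
    exact (ofUpperHalf_of_lt f (Fin.mk_lt_mk.2 (by omega))).trans
      (h _ (by simp [consecutivePairs]))

lemma card_isHamPathPerm_one_mul :
    #{r | IsTournament r ∧ IsHamPathPerm r (1 : Perm (Fin n))} * 2 ^ (n - 1) =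
      2 ^ n.choose 2 := by
  simp_rw [card_filter_isTournament_and, isHamPathPerm_one_ofUpperHalf_iff]
  simpa [card_consecutivePairs, card_orderedPair] using
    card_filter_forall_mem_eq_mul_pow (consecutivePairs n) (fun _ => true)

lemma sum_hamPathCount_mul :
    (∑ r ∈ {r : Fin n → Fin n → Bool | IsTournament r}, hamPathCount r) * 2 ^ (n - 1) =
      n.factorial * 2 ^ n.choose 2 := by
  have hdouble := sum_card_bipartiteAbove_eq_sum_card_bipartiteBelow IsHamPathPerm
    (s := {r : Fin n → Fin n → Bool | IsTournament r}) (t := univ)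
  simp only [bipartiteAbove, bipartiteBelow, filter_filter] at hdouble
  simp_rw [hamPathCount_eq_card, hdouble, card_isHamPathPerm_eq_card_one]
  rw [sum_const, Finset.card_univ, Fintype.card_perm, Fintype.card_fin, smul_eq_mul, mul_assoc,
    card_isHamPathPerm_one_mul]

end Tournament

open Tournament

theorem szele_general (n : ℕ) :
    ((∑ r ∈ Finset.univ.filter (IsTournament (n := n)),
        (hamPathCount r : ℝ)) / 2 ^ (n.choose 2) = (n.factorial : ℝ) / 2 ^ (n - 1)) ∧
      ∃ r : Fin n → Fin n → Bool, IsTournament r ∧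
        (n.factorial : ℝ) / 2 ^ (n - 1) ≤ hamPathCount r := by
  have hmean : (∑ r ∈ Finset.univ.filter (IsTournament (n := n)), (hamPathCount r : ℝ)) /
      2 ^ (n.choose 2) = (n.factorial : ℝ) / 2 ^ (n - 1) := by
    rw [div_eq_div_iff (by positivity) (by positivity)]
    exact_mod_cast sum_hamPathCount_mul
  refine ⟨hmean, ?_⟩
  have hcard : (#(univ.filter (IsTournament (n := n))) : ℝ) = 2 ^ n.choose 2 := by
    exact_mod_cast card_tournaments
  have hnonempty : (univ.filter (IsTournament (n := n))).Nonempty :=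
    card_pos.1 (by rw [card_tournaments]; positivity)
  obtain ⟨r, hr, hle⟩ := exists_le_of_sum_le hnonempty
    (f := fun _ => (n.factorial : ℝ) / 2 ^ (n - 1)) (g := fun r => (hamPathCount r : ℝ)) <| by
      rw [sum_const, nsmul_eq_mul, hcard, ← hmean, mul_div_cancel₀ _ (by positivity)]
  exact ⟨r, (mem_filter.1 hr).2, hle⟩

theorem szele (n : ℕ) (hn : 1 ≤ n) :
    ((∑ r ∈ Finset.univ.filter (IsTournament (n := n)),
        (hamPathCount r : ℝ)) / 2 ^ (n.choose 2) = (n.factorial : ℝ) / 2 ^ (n - 1)) ∧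
      ∃ r : Fin n → Fin n → Bool, IsTournament r ∧
        (n.factorial : ℝ) / 2 ^ (n - 1) ≤ hamPathCount r :=
  szele_general n
end
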